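/- (Localization bound for degree-3 Hermite functions) Let n ≥ 1, let 0 < C ≤ 1, and let q : ℝⁿ → ℝ be a function of the form q(x) = Σ_{α ∈ ℕⁿ, |α| = 3} c_α·He_α(x) with Σ_{|α|=3} α!·c_α² = 1 (i.e., ‖q‖_{L²(γ)} = 1). Then ∫ 1_{|x₁| < C}·q(x)² dγ(x) ≤ 2Φ(C) − 1. -/

import Mathlib

open MeasureTheory

/-- The standard Gaussian density `φ(x) = (1/√(2π)) e^{-x²/2}`. -/
noncomputable def gphi (x : ℝ) : ℝ := (Real.sqrt (2 * Real.pi))⁻¹ * Real.exp (-(x ^ 2) / 2)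

/-- The standard Gaussian CDF `Φ(x) = ∫_{-∞}^x φ(t) dt`. -/
noncomputable def gPhi (x : ℝ) : ℝ := ∫ t in Set.Iic x, gphi t

/-- The standard Gaussian measure on `ℝ^{n+1}`. -/
noncomputable def gauss (n : ℕ) : Measure (Fin (n + 1) → ℝ) :=
  Measure.pi fun _ => ProbabilityTheory.gaussianReal 0 1

/-- The multivariate probabilists' Hermite polynomial `He_α(x) = ∏ᵢ He_{αᵢ}(xᵢ)`. -/
noncomputable def hermiteProd {m : ℕ} (α : Fin m → ℕ) (x : Fin m → ℝ) : ℝ :=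
  ∏ i, Polynomial.aeval (x i) (Polynomial.hermite (α i))

/-- The factorial of a multi-index, `α! = ∏ᵢ αᵢ!`. -/
def mfact {m : ℕ} (α : Fin m → ℕ) : ℕ := ∏ i, Nat.factorial (α i)

/-- A Davie–Reeds strip pair in direction `x₁`, up to a `γ`-null set. -/
def StripPair (n : ℕ) (Cstar : ℝ) (f g : (Fin (n + 1) → ℝ) → ℝ) : Prop :=
  ∀ᵐ x ∂(gauss n),
    (Cstar ≤ x 0 → f x = 1 ∧ g x = 1) ∧
    (x 0 ≤ -Cstar → f x = -1 ∧ g x = -1) ∧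
    (|x 0| < Cstar → g x = -f x)

open Real Filter Asymptotics ProbabilityTheory Polynomial Set

noncomputable abbrev gm : Measure ℝ := ProbabilityTheory.gaussianReal 0 1

noncomputable def gex (x : ℝ) : ℝ := Real.exp (-(x ^ 2) / 2)

lemma gex_eq (x : ℝ) : gex x = Real.exp (-(1/2) * x ^ 2) := by
  unfold gex; ring_nf

lemma integrable_pow_gex (m : ℕ) : Integrable fun x : ℝ => x ^ m * gex x := by
  simp_rw [gex_eq]
  have := integrable_rpow_mul_exp_neg_mul_sq (b := 1/2) (by norm_num) (s := (m : ℝ))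
    (neg_one_lt_zero.trans_le (Nat.cast_nonneg m))
  simpa [Real.rpow_natCast] using this

lemma integral_gex : ∫ x : ℝ, gex x = Real.sqrt (2 * Real.pi) := by
  simp_rw [gex_eq, integral_gaussian]
  rw [show Real.pi / (1/2) = 2 * Real.pi by ring]

lemma tendsto_pow_gex_atTop (k : ℕ) :
    Tendsto (fun x : ℝ => x ^ k * gex x) atTop (nhds 0) := by
  have h := (rpow_mul_exp_neg_mul_sq_isLittleO_exp_neg (b := 1/2) (by norm_num) (k : ℝ))
  have h3 : Tendsto (fun x : ℝ => -(1/2) * x) atTop atBot :=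
    tendsto_id.const_mul_atTop_of_neg (by norm_num)
  have h2 : Tendsto (fun x : ℝ => Real.exp (-(1/2) * x)) atTop (nhds 0) :=
    Real.tendsto_exp_atBot.comp h3
  have := h.tendsto_zero_of_tendsto h2
  simpa [Real.rpow_natCast, gex_eq] using this

lemma tendsto_pow_gex_atBot (k : ℕ) :
    Tendsto (fun x : ℝ => x ^ k * gex x) atBot (nhds 0) := by
  have h := ((tendsto_pow_gex_atTop k).const_mul ((-1 : ℝ) ^ k)).comp tendsto_neg_atBot_atTop
  rw [show ((0:ℝ)) = ((-1 : ℝ) ^ k) * 0 by ring] 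
  convert h using 2 with x
  simp only [Function.comp_apply]
  unfold gex
  rw [neg_pow]
  ring_nf
  rw [mul_comm k 2, pow_mul]
  norm_num

lemma hasDerivAt_gex (x : ℝ) : HasDerivAt gex (-x * gex x) x := by
  have h1 : HasDerivAt (fun x : ℝ => -(x ^ 2) / 2) (-x) x := by
    have := ((hasDerivAt_pow 2 x).neg.div_const 2)
    refine this.congr_deriv ?_
    simp; ring
  have := h1.exp
  unfold gex
  simpa [mul_comm] using this

lemma gex_rec (m : ℕ) :
    ∫ x : ℝ, x ^ (m + 2) * gex x = (m + 1) * ∫ x : ℝ, x ^ m * gex x := by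
  have hder : ∀ x : ℝ, HasDerivAt (fun x : ℝ => -(x ^ (m + 1) * gex x))
      (x ^ (m + 2) * gex x - (m + 1) * (x ^ m * gex x)) x := by
    intro x
    have h1 : HasDerivAt (fun x : ℝ => x ^ (m + 1)) ((m + 1) * x ^ m) x := by
      simpa using hasDerivAt_pow (m + 1) x
    have := (h1.mul (hasDerivAt_gex x)).neg
    refine this.congr_deriv ?_
    unfold gex
    push_cast
    ring
  have hint : Integrable (fun x : ℝ => x ^ (m + 2) * gex x - (m + 1) * (x ^ m * gex x)) :=
    (integrable_pow_gex (m + 2)).sub ((integrable_pow_gex m).const_mul _)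
  have h0 := integral_of_hasDerivAt_of_tendsto hder hint
    (by simpa using (tendsto_pow_gex_atBot (m + 1)).neg)
    (by simpa using (tendsto_pow_gex_atTop (m + 1)).neg)
  rw [integral_sub (integrable_pow_gex (m + 2)) ((integrable_pow_gex m).const_mul _),
    integral_const_mul] at h0
  linarith [h0]

lemma gex_odd1 : ∫ x : ℝ, x ^ 1 * gex x = 0 := by
  have hder : ∀ x : ℝ, HasDerivAt (fun x : ℝ => -(gex x)) (x ^ 1 * gex x) x := by
    intro x
    have := (hasDerivAt_gex x).neg
    refine this.congr_deriv ?_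
    ring
  have h0 := integral_of_hasDerivAt_of_tendsto hder (integrable_pow_gex 1)
    (by simpa using (tendsto_pow_gex_atBot 0).neg)
    (by simpa using (tendsto_pow_gex_atTop 0).neg)
  simpa using h0

lemma gex_mom : (∫ x : ℝ, x ^ 0 * gex x = Real.sqrt (2 * Real.pi)) ∧
    (∫ x : ℝ, x ^ 1 * gex x = 0) ∧
    (∫ x : ℝ, x ^ 2 * gex x = Real.sqrt (2 * Real.pi)) ∧
    (∫ x : ℝ, x ^ 3 * gex x = 0) ∧
    (∫ x : ℝ, x ^ 4 * gex x = 3 * Real.sqrt (2 * Real.pi)) ∧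
    (∫ x : ℝ, x ^ 5 * gex x = 0) ∧
    (∫ x : ℝ, x ^ 6 * gex x = 15 * Real.sqrt (2 * Real.pi)) := by
  have h0 : ∫ x : ℝ, x ^ 0 * gex x = Real.sqrt (2 * Real.pi) := by
    simpa using integral_gex
  have h1 := gex_odd1
  have h2 := gex_rec 0
  have h3 := gex_rec 1
  have h4 := gex_rec 2
  have h5 := gex_rec 3
  have h6 := gex_rec 4
  rw [h0] at h2
  rw [h1] at h3
  rw [h2] at h4
  rw [h3] at h5
  rw [h4] at h6
  push_cast at h2 h3 h4 h5 h6
  exact ⟨h0, h1, by linarith, by linarith, by linarith, by linarith, by linarith⟩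

lemma gphi_eq (x : ℝ) : gaussianPDFReal 0 1 x = gphi x := by
  unfold gaussianPDFReal gphi
  norm_num

lemma sqrt2pi_pos : 0 < Real.sqrt (2 * Real.pi) :=
  Real.sqrt_pos.mpr (by positivity)

lemma gphi_nonneg (x : ℝ) : 0 ≤ gphi x := by
  unfold gphi; positivity

lemma integral_gm (g : ℝ → ℝ) : ∫ x, g x ∂gm = ∫ x, gphi x * g x := by
  rw [show gm = volume.withDensity (gaussianPDF 0 1) from gaussianReal_of_var_ne_zero 0 one_ne_zero]
  rw [gaussianPDF_def]
  simp_rw [ENNReal.ofReal]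
  rw [integral_withDensity_eq_integral_smul ((measurable_gaussianPDFReal 0 1).real_toNNReal) g]
  refine integral_congr_ae (Eventually.of_forall fun x => ?_)
  simp only [NNReal.smul_def, gphi_eq, Real.coe_toNNReal _ (gphi_nonneg x), smul_eq_mul]

lemma integrable_gm_iff (g : ℝ → ℝ) :
    Integrable g gm ↔ Integrable (fun x => gphi x * g x) volume := by
  rw [show gm = volume.withDensity (gaussianPDF 0 1) from gaussianReal_of_var_ne_zero 0 one_ne_zero]
  rw [gaussianPDF_def]
  simp_rw [ENNReal.ofReal]
  rw [integrable_withDensity_iff_integrable_smul ((measurable_gaussianPDFReal 0 1).real_toNNReal)]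
  constructor <;> intro h <;> refine h.congr (Eventually.of_forall fun x => ?_) <;>
    simp only [NNReal.smul_def, gphi_eq, Real.coe_toNNReal _ (gphi_nonneg x), smul_eq_mul]

lemma integrable_pow_gm (m : ℕ) : Integrable (fun x : ℝ => x ^ m) gm := by
  rw [integrable_gm_iff]
  refine ((integrable_pow_gex m).const_mul ((Real.sqrt (2 * Real.pi))⁻¹)).congr
    (Eventually.of_forall fun x => ?_)
  unfold gphi gex; ring

lemma integral_pow_gm (m : ℕ) (c : ℝ) (h : ∫ x : ℝ, x ^ m * gex x = c * Real.sqrt (2 * Real.pi)) :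
    ∫ x : ℝ, x ^ m ∂gm = c := by
  rw [integral_gm]
  calc ∫ x : ℝ, gphi x * x ^ m
      = ∫ x : ℝ, (Real.sqrt (2 * Real.pi))⁻¹ * (x ^ m * gex x) := by
        congr 1; ext x; unfold gphi gex; ring
    _ = (Real.sqrt (2 * Real.pi))⁻¹ * (c * Real.sqrt (2 * Real.pi)) := by
        rw [integral_const_mul, h]
    _ = c := by field_simp

lemma gm_mom0 : ∫ x : ℝ, x ^ 0 ∂gm = 1 := integral_pow_gm 0 1 (by rw [gex_mom.1]; ring)

lemma gm_mom1 : ∫ x : ℝ, x ^ 1 ∂gm = 0 := integral_pow_gm 1 0 (by rw [gex_mom.2.1]; ring)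

lemma gm_mom2 : ∫ x : ℝ, x ^ 2 ∂gm = 1 := integral_pow_gm 2 1 (by rw [gex_mom.2.2.1]; ring)

lemma gm_mom3 : ∫ x : ℝ, x ^ 3 ∂gm = 0 := integral_pow_gm 3 0 (by rw [gex_mom.2.2.2.1]; ring)

lemma gm_mom4 : ∫ x : ℝ, x ^ 4 ∂gm = 3 := integral_pow_gm 4 3 (by rw [gex_mom.2.2.2.2.1])

lemma gm_mom5 : ∫ x : ℝ, x ^ 5 ∂gm = 0 := integral_pow_gm 5 0 (by rw [gex_mom.2.2.2.2.2.1]; ring)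

lemma gm_mom6 : ∫ x : ℝ, x ^ 6 ∂gm = 15 := integral_pow_gm 6 15 (by rw [gex_mom.2.2.2.2.2.2])

lemma int_poly (a0 a1 a2 a3 a4 a5 a6 : ℝ) :
    ∫ x : ℝ, (a0 * x ^ 0 + (a1 * x ^ 1 + (a2 * x ^ 2 + (a3 * x ^ 3 +
      (a4 * x ^ 4 + (a5 * x ^ 5 + a6 * x ^ 6)))))) ∂gm
    = a0 + a2 + 3 * a4 + 15 * a6 := by
  have I : ∀ m : ℕ, ∀ a : ℝ, Integrable (fun x : ℝ => a * x ^ m) gm :=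
    fun m a => (integrable_pow_gm m).const_mul a
  have I6 : Integrable (fun x : ℝ => a6 * x ^ 6) gm := I 6 a6
  have I56 : Integrable (fun x : ℝ => a5 * x ^ 5 + a6 * x ^ 6) gm := (I 5 a5).add I6
  have I46 : Integrable (fun x : ℝ => a4 * x ^ 4 + (a5 * x ^ 5 + a6 * x ^ 6)) gm :=
    (I 4 a4).add I56
  have I36 : Integrable (fun x : ℝ => a3 * x ^ 3 + (a4 * x ^ 4 + (a5 * x ^ 5 + a6 * x ^ 6))) gm :=
    (I 3 a3).add I46
  have I26 : Integrable (fun x : ℝ => a2 * x ^ 2 + (a3 * x ^ 3 + (a4 * x ^ 4 +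
      (a5 * x ^ 5 + a6 * x ^ 6)))) gm := (I 2 a2).add I36
  have I16 : Integrable (fun x : ℝ => a1 * x ^ 1 + (a2 * x ^ 2 + (a3 * x ^ 3 + (a4 * x ^ 4 +
      (a5 * x ^ 5 + a6 * x ^ 6))))) gm := (I 1 a1).add I26
  rw [integral_add (I 0 a0) I16, integral_add (I 1 a1) I26, integral_add (I 2 a2) I36,
    integral_add (I 3 a3) I46, integral_add (I 4 a4) I56, integral_add (I 5 a5) I6,
    integral_const_mul, integral_const_mul, integral_const_mul, integral_const_mul,
    integral_const_mul, integral_const_mul, integral_const_mul,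
    gm_mom0, gm_mom1, gm_mom2, gm_mom3, gm_mom4, gm_mom5, gm_mom6]
  ring


noncomputable def He (k : ℕ) (x : ℝ) : ℝ := Polynomial.aeval x (Polynomial.hermite k)

lemma hermite_two : (Polynomial.hermite 2 : Polynomial ℤ) = X ^ 2 - 1 := by
  rw [hermite_succ, hermite_one]
  simp
  ring

lemma hermite_three : (Polynomial.hermite 3 : Polynomial ℤ) = X ^ 3 - 3 * X := by
  rw [hermite_succ, hermite_two]
  simp [derivative_sub, derivative_X_pow]
  ring

lemma He0 (x : ℝ) : He 0 x = 1 := by simp [He, hermite_zero]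

lemma He1 (x : ℝ) : He 1 x = x := by simp [He, hermite_one]

lemma He2 (x : ℝ) : He 2 x = x ^ 2 - 1 := by simp [He, hermite_two]; ring

lemma He3 (x : ℝ) : He 3 x = x ^ 3 - 3 * x := by simp [He, hermite_three]; ring

lemma integrable_poly (p : Polynomial ℝ) : Integrable (fun x => p.eval x) gm := by
  induction p using Polynomial.induction_on' with
  | add p q hp hq => simp only [Polynomial.eval_add]; exact hp.add hq
  | monomial n a => simpa [Polynomial.eval_monomial] using (integrable_pow_gm n).const_mul a

lemma integrable_He_mul (j k : ℕ) :
    Integrable (fun x : ℝ => He j x * He k x) gm := by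
  have h := integrable_poly ((Polynomial.hermite j * Polynomial.hermite k).map (algebraMap ℤ ℝ))
  refine h.congr (Eventually.of_forall fun x => ?_)
  simp only [He, Polynomial.eval_map, Polynomial.aeval_def, Polynomial.eval₂_mul]

lemma int_He (j k : ℕ) (a0 a1 a2 a3 a4 a5 a6 : ℝ)
    (h : ∀ x : ℝ, He j x * He k x = a0 * x ^ 0 + (a1 * x ^ 1 + (a2 * x ^ 2 + (a3 * x ^ 3 +
      (a4 * x ^ 4 + (a5 * x ^ 5 + a6 * x ^ 6)))))) :
    ∫ x, He j x * He k x ∂gm = a0 + a2 + 3 * a4 + 15 * a6 := by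
  simp_rw [h]
  exact int_poly a0 a1 a2 a3 a4 a5 a6

lemma He_orth (j k : ℕ) (hj : j ≤ 3) (hk : k ≤ 3) :
    ∫ x, He j x * He k x ∂gm = if j = k then (Nat.factorial j : ℝ) else 0 := by
  interval_cases j <;> interval_cases k
  · rw [int_He 0 0 1 0 0 0 0 0 0 (fun x => by simp only [He0, He1, He2, He3]; ring)]; norm_num
  · rw [int_He 0 1 0 1 0 0 0 0 0 (fun x => by simp only [He0, He1, He2, He3]; ring)]; norm_num
  · rw [int_He 0 2 (-1) 0 1 0 0 0 0 (fun x => by simp only [He0, He1, He2, He3]; ring)]; norm_num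
  · rw [int_He 0 3 0 (-3) 0 1 0 0 0 (fun x => by simp only [He0, He1, He2, He3]; ring)]; norm_num
  · rw [int_He 1 0 0 1 0 0 0 0 0 (fun x => by simp only [He0, He1, He2, He3]; ring)]; norm_num
  · rw [int_He 1 1 0 0 1 0 0 0 0 (fun x => by simp only [He0, He1, He2, He3]; ring)]; norm_num
  · rw [int_He 1 2 0 (-1) 0 1 0 0 0 (fun x => by simp only [He0, He1, He2, He3]; ring)]; norm_num
  · rw [int_He 1 3 0 0 (-3) 0 1 0 0 (fun x => by simp only [He0, He1, He2, He3]; ring)]; norm_num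
  · rw [int_He 2 0 (-1) 0 1 0 0 0 0 (fun x => by simp only [He0, He1, He2, He3]; ring)]; norm_num
  · rw [int_He 2 1 0 (-1) 0 1 0 0 0 (fun x => by simp only [He0, He1, He2, He3]; ring)]; norm_num
  · rw [int_He 2 2 1 0 (-2) 0 1 0 0 (fun x => by simp only [He0, He1, He2, He3]; ring)]; norm_num
  · rw [int_He 2 3 0 3 0 (-4) 0 1 0 (fun x => by simp only [He0, He1, He2, He3]; ring)]; norm_num
  · rw [int_He 3 0 0 (-3) 0 1 0 0 0 (fun x => by simp only [He0, He1, He2, He3]; ring)]; norm_num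
  · rw [int_He 3 1 0 0 (-3) 0 1 0 0 (fun x => by simp only [He0, He1, He2, He3]; ring)]; norm_num
  · rw [int_He 3 2 0 3 0 (-4) 0 1 0 (fun x => by simp only [He0, He1, He2, He3]; ring)]; norm_num
  · rw [int_He 3 3 0 0 9 0 (-6) 0 1 (fun x => by simp only [He0, He1, He2, He3]; ring)]; norm_num [Nat.factorial]

lemma integrable_gphi : Integrable gphi := by
  have := (integrable_pow_gex 0).const_mul (Real.sqrt (2 * Real.pi))⁻¹
  refine this.congr (Eventually.of_forall fun x => ?_)
  unfold gex gphi; ring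

lemma integral_gphi : ∫ x : ℝ, gphi x = 1 := by
  have h := integral_gex
  unfold gex at h
  unfold gphi
  rw [integral_const_mul, h, inv_mul_cancel₀ (ne_of_gt sqrt2pi_pos)]

lemma gphi_even (x : ℝ) : gphi (-x) = gphi x := by unfold gphi; rw [neg_pow]; ring_nf

lemma gPhi_neg (x : ℝ) : gPhi (-x) = 1 - gPhi x := by
  have h1 : ∫ t in Set.Iic (-x), gphi t = ∫ t in Set.Ioi x, gphi t := by
    calc ∫ t in Set.Iic (-x), gphi t = ∫ t in Set.Iic (-x), gphi (-t) := by simp_rw [gphi_even]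
      _ = ∫ t in Set.Ioi (-(-x)), gphi t := integral_comp_neg_Iic _ _
      _ = ∫ t in Set.Ioi x, gphi t := by rw [neg_neg]
  have h2 : gPhi x + ∫ t in Set.Ioi x, gphi t = 1 := by
    rw [← integral_gphi]
    unfold gPhi
    rw [← setIntegral_union (Set.Iic_disjoint_Ioi le_rfl) measurableSet_Ioi
      integrable_gphi.integrableOn integrable_gphi.integrableOn, Set.Iic_union_Ioi,
      setIntegral_univ]
  unfold gPhi at h2 ⊢
  rw [h1]
  linarith

lemma ind_integral (C : ℝ) (hC0 : 0 < C) :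
    ∫ x, (if |x| < C then (1:ℝ) else 0) ∂gm = 2 * gPhi C - 1 := by
  rw [integral_gm]
  have h1 : ∀ x : ℝ, gphi x * (if |x| < C then (1:ℝ) else 0)
      = Set.indicator (Set.Ioo (-C) C) gphi x := by
    intro x
    rw [Set.indicator_apply]
    by_cases h : |x| < C
    · rw [if_pos h, if_pos (by rw [Set.mem_Ioo, ← abs_lt]; exact h), mul_one]
    · rw [if_neg h, if_neg (by rw [Set.mem_Ioo, ← abs_lt]; exact h), mul_zero]
  simp_rw [h1]
  rw [integral_indicator measurableSet_Ioo]
  rw [← MeasureTheory.integral_Ioc_eq_integral_Ioo,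
    ← intervalIntegral.integral_of_le (by linarith : -C ≤ C),
    ← intervalIntegral.integral_Iic_sub_Iic integrable_gphi.integrableOn integrable_gphi.integrableOn]
  have h2 := gPhi_neg C
  unfold gPhi at h2 ⊢
  linarith

lemma He_sq_le (k : ℕ) (hk : k ≤ 3) (t : ℝ) (ht : |t| ≤ 1) :
    (He k t) ^ 2 ≤ (Nat.factorial k : ℝ) := by
  have h1 := abs_le.mp ht
  interval_cases k
  · rw [He0]; norm_num
  · rw [He1]; simp [Nat.factorial]; nlinarith
  · rw [He2]; simp [Nat.factorial]
    have h2 : t ^ 2 ≤ 1 := by nlinarith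
    nlinarith [sq_nonneg t, mul_le_mul_of_nonneg_left h2 (sq_nonneg t)]
  · rw [He3]; simp [Nat.factorial]
    have h2 : t ^ 2 ≤ 1 := by nlinarith
    have h3 : (0:ℝ) ≤ (1 - t ^ 2) ^ 2 * (4 - t ^ 2) := mul_nonneg (sq_nonneg _) (by nlinarith)
    nlinarith [h3]

lemma strip_bound (C : ℝ) (hC0 : 0 < C) (hC1 : C ≤ 1) (k : ℕ) (hk : k ≤ 3) :
    ∫ t, (if |t| < C then (1:ℝ) else 0) * (He k t * He k t) ∂gm
      ≤ (2 * gPhi C - 1) * (Nat.factorial k : ℝ) := by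
  have hmeas : Measurable fun t : ℝ => (if |t| < C then (1:ℝ) else 0) := by
    apply Measurable.ite _ measurable_const measurable_const
    exact measurableSet_lt (measurable_id.abs) measurable_const
  have hint1 : Integrable (fun t : ℝ => (if |t| < C then (1:ℝ) else 0) * (He k t * He k t)) gm :=
    (integrable_He_mul k k).bdd_mul hmeas.aestronglyMeasurable (c := 1)
      (Eventually.of_forall fun x => by by_cases h : |x| < C <;> simp [h])
  have hint2 : Integrable (fun t : ℝ => (if |t| < C then (1:ℝ) else 0) * (Nat.factorial k : ℝ)) gm := by
    refine (integrable_const ((Nat.factorial k : ℝ))).mono'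
      ((hmeas.mul measurable_const).aestronglyMeasurable)
      (Eventually.of_forall fun x => ?_)
    by_cases h : |x| < C <;> simp [h, abs_of_nonneg]
  have hle : ∀ t : ℝ, (if |t| < C then (1:ℝ) else 0) * (He k t * He k t)
      ≤ (if |t| < C then (1:ℝ) else 0) * (Nat.factorial k : ℝ) := by
    intro t
    by_cases h : |t| < C
    · rw [if_pos h, one_mul, one_mul, ← sq]
      exact He_sq_le k hk t (le_of_lt (lt_of_lt_of_le h hC1))
    · rw [if_neg h, zero_mul, zero_mul]
  calc ∫ t, (if |t| < C then (1:ℝ) else 0) * (He k t * He k t) ∂gm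
      ≤ ∫ t, (if |t| < C then (1:ℝ) else 0) * (Nat.factorial k : ℝ) ∂gm :=
        integral_mono hint1 hint2 hle
    _ = (2 * gPhi C - 1) * (Nat.factorial k : ℝ) := by
        rw [integral_mul_const, ind_integral C hC0]

lemma pi_integrable {m : ℕ} {f : Fin m → ℝ → ℝ} (hf : ∀ i, Integrable (f i) gm) :
    Integrable (fun x : Fin m → ℝ => ∏ i, f i (x i)) (Measure.pi fun _ => gm) := by
  induction m with
  | zero => simp [integrable_const_iff]
  | succ n ih =>
    have h := ((measurePreserving_piFinSuccAbove (fun _ : Fin (n + 1) => gm) 0).symm)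
    rw [← h.integrable_comp_emb (MeasurableEquiv.measurableEmbedding _)]
    simp_rw [MeasurableEquiv.piFinSuccAbove_symm_apply, Fin.insertNthEquiv,
      Fin.prod_univ_succ, Fin.insertNth_zero]
    simp only [Fin.zero_succAbove, Function.comp_def, Fin.cons_zero, Fin.cons_succ,
      Equiv.coe_fn_mk]
    have h2 : Integrable (fun (x : Fin n → ℝ) => ∏ j, f (Fin.succ j) (x j))
        (Measure.pi fun _ => gm) := ih fun i => hf _
    exact Integrable.mul_prod (hf 0) h2

lemma pi_integral {m : ℕ} (f : Fin m → ℝ → ℝ) :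
    ∫ x : Fin m → ℝ, ∏ i, f i (x i) ∂(Measure.pi fun _ => gm) = ∏ i, ∫ x, f i x ∂gm := by
  induction m with
  | zero => simp
  | succ n ih =>
    calc ∫ x : Fin (n + 1) → ℝ, ∏ i, f i (x i) ∂(Measure.pi fun _ => gm)
        = ∫ p : ℝ × (Fin n → ℝ), f 0 p.1 * ∏ i : Fin n, f i.succ (p.2 i)
            ∂(gm.prod (Measure.pi fun _ => gm)) := by
          rw [← ((measurePreserving_piFinSuccAbove (fun _ : Fin (n + 1) => gm) 0).symm).integral_comp']
          simp only [MeasurableEquiv.piFinSuccAbove_symm_apply, Fin.insertNthEquiv,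
            Fin.prod_univ_succ, Fin.insertNth_zero, Equiv.coe_fn_mk, Fin.cons_succ,
            Fin.zero_succAbove, cast_eq, Fin.cons_zero]
      _ = (∫ x, f 0 x ∂gm) * ∏ i : Fin n, ∫ x, f i.succ x ∂gm := by
          rw [← ih fun i => f i.succ, ← integral_prod_mul]
      _ = ∏ i, ∫ x, f i x ∂gm := by rw [Fin.prod_univ_succ]

lemma integrable_ind_He (C : ℝ) (j k : ℕ) :
    Integrable (fun t : ℝ => (if |t| < C then (1:ℝ) else 0) * (He j t * He k t)) gm := by
  have hmeas : Measurable fun t : ℝ => (if |t| < C then (1:ℝ) else 0) := by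
    apply Measurable.ite _ measurable_const measurable_const
    exact measurableSet_lt (measurable_id.abs) measurable_const
  exact (integrable_He_mul j k).bdd_mul hmeas.aestronglyMeasurable (c := 1)
    (Eventually.of_forall fun x => by by_cases h : |x| < C <;> simp [h])

/-- Localization bound for unit-norm degree-3 Hermite functions:
the mass of `q²` on the strip `|x₁| < C` is at most the Gaussian measure of the strip. -/
theorem degree_three_localization (n : ℕ) (C : ℝ) (hC0 : 0 < C) (hC1 : C ≤ 1)
    (c : (Fin (n + 1) → ℕ) → ℝ)
    (hnorm : ∑ α ∈ Finset.Nat.antidiagonalTuple (n + 1) 3, (mfact α : ℝ) * c α ^ 2 = 1)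
    (q : (Fin (n + 1) → ℝ) → ℝ)
    (hq : ∀ x, q x = ∑ α ∈ Finset.Nat.antidiagonalTuple (n + 1) 3, c α * hermiteProd α x) :
    ∫ x, (if |x 0| < C then 1 else 0) * q x ^ 2 ∂gauss n ≤ 2 * gPhi C - 1 := by
  classical
  set S := Finset.Nat.antidiagonalTuple (n + 1) 3 with hS
  -- the factor functions
  set g : (Fin (n + 1) → ℕ) → (Fin (n + 1) → ℕ) → Fin (n + 1) → ℝ → ℝ :=
    fun α β i t => (if i = 0 then (if |t| < C then (1:ℝ) else 0) else 1)
      * (He (α i) t * He (β i) t) with hg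
  -- bound on indices
  have hidx : ∀ α ∈ S, ∀ i, α i ≤ 3 := by
    intro α hα i
    rw [hS, Finset.Nat.mem_antidiagonalTuple] at hα
    calc α i ≤ ∑ j, α j := Finset.single_le_sum (fun j _ => Nat.zero_le _) (Finset.mem_univ i)
      _ = 3 := hα
  -- integrability of factors
  have hgint : ∀ α β i, Integrable (g α β i) gm := by
    intro α β i
    by_cases hi : i = 0
    · exact (integrable_ind_He C (α i) (β i)).congr
        (Eventually.of_forall fun t => by rw [hg]; simp [hi])
    · exact (integrable_He_mul (α i) (β i)).congr
        (Eventually.of_forall fun t => by rw [hg]; simp [hi])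
  -- product identity
  have hprod : ∀ α β : Fin (n + 1) → ℕ, ∀ x : Fin (n + 1) → ℝ,
      ∏ i, g α β i (x i)
        = (if |x 0| < C then (1:ℝ) else 0) * (hermiteProd α x * hermiteProd β x) := by
    intro α β x
    rw [hg]
    simp only
    rw [Finset.prod_mul_distrib, Finset.prod_mul_distrib]
    congr 1
    · rw [Finset.prod_ite_eq' Finset.univ (0 : Fin (n + 1))
        (fun i => if |x i| < C then (1:ℝ) else 0)]
      simp
  -- pointwise expansion of the integrand
  have hpt : ∀ x : Fin (n + 1) → ℝ, (if |x 0| < C then (1:ℝ) else 0) * q x ^ 2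
      = ∑ α ∈ S, ∑ β ∈ S, (c α * c β) * ∏ i, g α β i (x i) := by
    intro x
    rw [hq, sq, Finset.sum_mul_sum, Finset.mul_sum]
    refine Finset.sum_congr rfl fun α _ => ?_
    rw [Finset.mul_sum]
    refine Finset.sum_congr rfl fun β _ => ?_
    rw [hprod]
    ring
  -- each term integrable
  have hterm_int : ∀ α β : Fin (n + 1) → ℕ,
      Integrable (fun x : Fin (n + 1) → ℝ => (c α * c β) * ∏ i, g α β i (x i)) (gauss n) :=
    fun α β => (pi_integrable (hgint α β)).const_mul _
  -- compute the integral as a double sum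
  have hint : ∫ x, (if |x 0| < C then (1:ℝ) else 0) * q x ^ 2 ∂gauss n
      = ∑ α ∈ S, ∑ β ∈ S, (c α * c β) * ∏ i, ∫ t, g α β i t ∂gm := by
    simp_rw [hpt]
    rw [integral_finset_sum S (fun α _ => integrable_finset_sum S fun β _ => hterm_int α β)]
    refine Finset.sum_congr rfl fun α _ => ?_
    rw [integral_finset_sum S (fun β _ => hterm_int α β)]
    refine Finset.sum_congr rfl fun β _ => ?_
    rw [integral_const_mul, show gauss n = Measure.pi fun _ => gm from rfl, pi_integral]
  -- off-diagonal terms vanish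
  have hoff : ∀ α ∈ S, ∀ β ∈ S, β ≠ α → (c α * c β) * ∏ i, ∫ t, g α β i t ∂gm = 0 := by
    intro α hα β hβ hne
    have hex : ∃ i : Fin (n + 1), i ≠ 0 ∧ α i ≠ β i := by
      by_contra hc
      push_neg at hc
      have h0 : α 0 = β 0 := by
        have hsα : ∑ j, α j = 3 := by rwa [hS, Finset.Nat.mem_antidiagonalTuple] at hα
        have hsβ : ∑ j, β j = 3 := by rwa [hS, Finset.Nat.mem_antidiagonalTuple] at hβ
        have h1 : ∑ j ∈ Finset.univ.erase 0, α j = ∑ j ∈ Finset.univ.erase 0, β j :=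
          Finset.sum_congr rfl fun j hj => hc j (Finset.ne_of_mem_erase hj)
        have h2 := Finset.add_sum_erase Finset.univ α (Finset.mem_univ (0 : Fin (n + 1)))
        have h3 := Finset.add_sum_erase Finset.univ β (Finset.mem_univ (0 : Fin (n + 1)))
        omega
      apply hne
      funext i
      by_cases hi : i = 0
      · rw [hi, h0]
      · rw [hc i hi]
    obtain ⟨i, hi0, hiab⟩ := hex
    have hfac : ∫ t, g α β i t ∂gm = 0 := by
      have : ∀ t : ℝ, g α β i t = He (α i) t * He (β i) t := by
        intro t; rw [hg]; simp [hi0]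
      simp_rw [this]
      rw [He_orth (α i) (β i) (hidx α hα i) (hidx β hβ i), if_neg hiab]
    exact mul_eq_zero_of_right _ (Finset.prod_eq_zero (Finset.mem_univ i) hfac)
  -- diagonal bound
  have hdiag : ∀ α ∈ S, (c α * c α) * ∏ i, ∫ t, g α α i t ∂gm
      ≤ (2 * gPhi C - 1) * ((mfact α : ℝ) * c α ^ 2) := by
    intro α hα
    have hsplit : ∏ i, ∫ t, g α α i t ∂gm
        = (∫ t, g α α 0 t ∂gm) * ∏ i : Fin n, ∫ t, g α α i.succ t ∂gm :=
      Fin.prod_univ_succ _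
    have hnonzero : ∀ i : Fin n, ∫ t, g α α i.succ t ∂gm = (Nat.factorial (α i.succ) : ℝ) := by
      intro i
      have : ∀ t : ℝ, g α α i.succ t = He (α i.succ) t * He (α i.succ) t := by
        intro t; rw [hg]; simp [Fin.succ_ne_zero i]
      simp_rw [this]
      rw [He_orth _ _ (hidx α hα i.succ) (hidx α hα i.succ), if_pos rfl]
    have hzero : ∫ t, g α α 0 t ∂gm
        ≤ (2 * gPhi C - 1) * (Nat.factorial (α 0) : ℝ) := by
      have : ∀ t : ℝ, g α α 0 t
          = (if |t| < C then (1:ℝ) else 0) * (He (α 0) t * He (α 0) t) := by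
        intro t; rw [hg]; simp
      simp_rw [this]
      exact strip_bound C hC0 hC1 (α 0) (hidx α hα 0)
    have hP : (0:ℝ) ≤ ∏ i : Fin n, (Nat.factorial (α i.succ) : ℝ) :=
      Finset.prod_nonneg fun i _ => Nat.cast_nonneg _
    have hmf : (mfact α : ℝ)
        = (Nat.factorial (α 0) : ℝ) * ∏ i : Fin n, (Nat.factorial (α i.succ) : ℝ) := by
      rw [mfact]
      push_cast
      exact Fin.prod_univ_succ _
    rw [hsplit]
    simp_rw [hnonzero]
    have h1 : (∫ t, g α α 0 t ∂gm) * ∏ i : Fin n, (Nat.factorial (α i.succ) : ℝ)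
        ≤ ((2 * gPhi C - 1) * (Nat.factorial (α 0) : ℝ))
          * ∏ i : Fin n, (Nat.factorial (α i.succ) : ℝ) :=
      mul_le_mul_of_nonneg_right hzero hP
    have h2 := mul_le_mul_of_nonneg_left h1 (mul_self_nonneg (c α))
    calc (c α * c α) * ((∫ t, g α α 0 t ∂gm) * ∏ i : Fin n, (Nat.factorial (α i.succ) : ℝ))
        ≤ (c α * c α) * (((2 * gPhi C - 1) * (Nat.factorial (α 0) : ℝ))
            * ∏ i : Fin n, (Nat.factorial (α i.succ) : ℝ)) := h2
      _ = (2 * gPhi C - 1) * ((mfact α : ℝ) * c α ^ 2) := by rw [hmf]; ring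
  -- conclude
  rw [hint]
  have hdiagsum : ∀ α ∈ S, ∑ β ∈ S, (c α * c β) * ∏ i, ∫ t, g α β i t ∂gm
      = (c α * c α) * ∏ i, ∫ t, g α α i t ∂gm := by
    intro α hα
    exact Finset.sum_eq_single_of_mem α hα fun β hβ hne => hoff α hα β hβ hne
  rw [Finset.sum_congr rfl hdiagsum]
  calc ∑ α ∈ S, (c α * c α) * ∏ i, ∫ t, g α α i t ∂gm
      ≤ ∑ α ∈ S, (2 * gPhi C - 1) * ((mfact α : ℝ) * c α ^ 2) :=
        Finset.sum_le_sum hdiag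
    _ = (2 * gPhi C - 1) * ∑ α ∈ S, (mfact α : ℝ) * c α ^ 2 := by rw [Finset.mul_sum]
    _ = 2 * gPhi C - 1 := by rw [hnorm, mul_one]
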